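/- The masking distance satisfies the triangle inequality: for transition systems A, A' (with fault set F'), and A'' (with fault set F'' ⊇ F'), δ_m(A, A'') ≤ δ_m(A, A') + δ_m(A', A''). -/

import Mathlib

/-- A labelled transition system with state type `S`, label type `L`. -/
structure TS (S L : Type) where
  step : S → L → S → Prop
  init : S

/-- Strong masking simulation between a nominal system `A` (over `Σ = L \ F`)
and an implementation `A'` (over `Σ ∪ F`), where the nominal system is
augmented with masking self-loops (so the mask-move condition B.3 asks for a
state `t` with `s →M t`, i.e. `t = s`, related to `t'`). -/
def IsMaskingSim {S S' L : Type} (A : TS S L) (A' : TS S' L) (F : Set L)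
    (M : S → S' → Prop) : Prop :=
  M A.init A'.init ∧
  ∀ s s', M s s' →
    (∀ e, e ∉ F → ∀ t, A.step s e t → ∃ t', A'.step s' e t' ∧ M t t') ∧
    (∀ e, e ∉ F → ∀ t', A'.step s' e t' → ∃ t, A.step s e t ∧ M t t') ∧
    (∀ f, f ∈ F → ∀ t', A'.step s' f t' → ∃ t, t = s ∧ M t t')

/-- States of the (strong) masking game graph: refuter states `(s, #, s', R)`,
verifier states `(s, σ^i, s', V)` (the `Bool` is `true` for side 1, i.e. a
pending label coming from the nominal system `A`, and `false` for side 2),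
and the error state. -/
inductive GS (S S' L : Type) : Type where
  | R : S → S' → GS S S' L
  | V : S → L → Bool → S' → GS S S' L
  | err : GS S S' L

/-- Basic edges of the masking game graph for nominal `A`, implementation `A'`,
fault labels `F` and masking label `m`. -/
inductive GEdge {S S' L : Type} (A : TS S L) (A' : TS S' L) (F : Set L) (m : L) :
    GS S S' L → L → GS S S' L → Prop where
  | chA {s s' σ t} : σ ∉ F → σ ≠ m → A.step s σ t →
      GEdge A A' F m (.R s s') σ (.V t σ true s')
  | chA' {s s' σ t'} : σ ≠ m → A'.step s' σ t' →
      GEdge A A' F m (.R s s') σ (.V s σ false t')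
  | matchA' {s σ s' t'} : σ ∉ F → σ ≠ m → A'.step s' σ t' →
      GEdge A A' F m (.V s σ true s') σ (.R s t')
  | matchA {s σ s' t} : σ ∉ F → σ ≠ m → A.step s σ t →
      GEdge A A' F m (.V s σ false s') σ (.R t s')
  | mask {s σ s'} : σ ∈ F →
      GEdge A A' F m (.V s σ false s') m (.R s s')

/-- Full edge relation of the masking game graph: basic edges, plus, for any
state with no outgoing basic edge (in particular the error state), edges
labelled by any `σ ∈ Σ` to the error state. -/
def fullEdge {S S' L : Type} (A : TS S L) (A' : TS S' L) (F : Set L) (m : L)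
    (v : GS S S' L) (σ : L) (w : GS S S' L) : Prop :=
  GEdge A A' F m v σ w ∨
    ((∀ l u, ¬ GEdge A A' F m v l u) ∧ σ ∉ F ∧ σ ≠ m ∧ w = GS.err)

/-- `true` on refuter states (including the error state). -/
def isRefB {S S' L : Type} : GS S S' L → Bool
  | .V _ _ _ _ => false
  | _ => true

/-- A verifier node whose pending label is a fault. -/
def isFaultV {S S' L : Type} (F : Set L) : GS S S' L → Prop
  | .V _ σ _ _ => σ ∈ F
  | _ => False

/-- The fault-stratified attractor sets `U^j_i` (first index `j`, second `i`):
`U^0_i = U^j_0 = ∅`, `U^1_1 = {err}`, and `U^{j+2}_{i+1}` collects refuter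
nodes with a successor in `U^{j+1}_{i+1}`, non-fault verifier nodes all of
whose successors are in `∪_{j'≤j+1} U^{j'}_{i+1}` with one in `U^{j+1}_{i+1}`,
and fault verifier nodes all of whose successors are in
`∪_{i'≤i, j'≤j+1} U^{j'}_{i'}` with one in `U^{j+1}_i`. -/
def Uset {α : Type} (post : α → Set α) (isRef isFault : α → Prop) (verr : α) :
    ℕ → ℕ → Set α
  | 0, _ => ∅
  | 1, i => if i = 1 then {verr} else ∅
  | _+2, 0 => ∅
  | j+2, i+1 =>
      {v | isRef v ∧ ∃ w ∈ post v, w ∈ Uset post isRef isFault verr (j+1) (i+1)} ∪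
      {v | ¬ isRef v ∧ ¬ isFault v ∧
            (∀ w ∈ post v, ∃ j' : Fin (j+2), w ∈ Uset post isRef isFault verr j' (i+1)) ∧
            ∃ w ∈ post v, w ∈ Uset post isRef isFault verr (j+1) (i+1)} ∪
      {v | ¬ isRef v ∧ isFault v ∧
            (∀ w ∈ post v, ∃ i' : Fin (i+1), ∃ j' : Fin (j+2),
              w ∈ Uset post isRef isFault verr j' i') ∧
            ∃ w ∈ post v, w ∈ Uset post isRef isFault verr (j+1) i}
  termination_by j _ => j
  decreasing_by all_goals first | exact j'.isLt | omega

/-- The sets `U^j_i` instantiated on the masking game graph of `A`, `A'`. -/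
def UsetG {S S' L : Type} (A : TS S L) (A' : TS S' L) (F : Set L) (m : L) :
    ℕ → ℕ → Set (GS S S' L) :=
  Uset (fun v => {w | ∃ l, fullEdge A A' F m v l w})
    (fun v => isRefB v = true) (isFaultV F) GS.err

/-- History-dependent strategies: given the history and the current state,
choose a label and a next state. -/
abbrev Strat (α L : Type) := List (α × L) → α → L × α

/-- The history (sequence of state/label pairs) of a play up to step `n`. -/
def hist {α L : Type} (ρ : ℕ → α) (σ : ℕ → L) (n : ℕ) : List (α × L) :=
  (List.range n).map fun k => (ρ k, σ k)

/-- `ρ, σ` form an (infinite) play of the graph `E` from `v0`. -/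
def IsPlay {α L : Type} (E : α → L → α → Prop) (v0 : α) (ρ : ℕ → α) (σ : ℕ → L) : Prop :=
  ρ 0 = v0 ∧ ∀ n, E (ρ n) (σ n) (ρ (n+1))

/-- The play `ρ, σ` conforms to the strategy `π` of the player owning the
states where `isRef · = mine`. -/
def Conf {α L : Type} (isRef : α → Bool) (mine : Bool) (π : Strat α L)
    (ρ : ℕ → α) (σ : ℕ → L) : Prop :=
  ∀ n, isRef (ρ n) = mine → (σ n, ρ (n+1)) = π (hist ρ σ n) (ρ n)

/-- Conformance to a memoryless (positional) strategy `f`. -/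
def MemConf {α L : Type} (isRef : α → Bool) (mine : Bool) (f : α → L × α)
    (ρ : ℕ → α) (σ : ℕ → L) : Prop :=
  ∀ n, isRef (ρ n) = mine → (σ n, ρ (n+1)) = f (ρ n)

/-- Auxiliary construction of the outcome of two strategies: history and
current state after `n` steps. -/
def outAux {α L : Type} (isRef : α → Bool) (πR πV : Strat α L) (v0 : α) :
    ℕ → List (α × L) × α
  | 0 => ([], v0)
  | n+1 =>
      let p := outAux isRef πR πV v0 n
      let c := if isRef p.2 then πR p.1 p.2 else πV p.1 p.2
      (p.1 ++ [(p.2, c.1)], c.2)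

/-- State sequence of the outcome `out(πR, πV)`. -/
def outSt {α L : Type} (isRef : α → Bool) (πR πV : Strat α L) (v0 : α) (n : ℕ) : α :=
  (outAux isRef πR πV v0 n).2

/-- Label sequence of the outcome `out(πR, πV)`. -/
def outLb {α L : Type} (isRef : α → Bool) (πR πV : Strat α L) (v0 : α) (n : ℕ) : L :=
  (if isRef (outSt isRef πR πV v0 n)
    then πR (outAux isRef πR πV v0 n).1 (outSt isRef πR πV v0 n)
    else πV (outAux isRef πR πV v0 n).1 (outSt isRef πR πV v0 n)).1

open Classical in
/-- The masking payoff `f_m(ρ) = lim_n pr1(v_n) / (1 + Σ_{i≤n} pr0(v_i))`,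
where `v_n = (χ_F(σ_n), χ_{err}(ρ_{n+1}))`. -/
noncomputable def payoff {α L : Type} (F : Set L) (verr : α)
    (ρ : ℕ → α) (σ : ℕ → L) : ℝ :=
  Filter.limUnder Filter.atTop fun n =>
    (if ρ (n+1) = verr then (1:ℝ) else 0) /
      (1 + ∑ i ∈ Finset.range (n+1), (if σ i ∈ F then (1:ℝ) else 0))

/-- Refuter strategies (valid at refuter nodes). -/
abbrev RStrat {S S' L : Type} (A : TS S L) (A' : TS S' L) (F : Set L) (m : L) :=
  {π : Strat (GS S S' L) L //
    ∀ h v, isRefB v = true → fullEdge A A' F m v (π h v).1 (π h v).2}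

/-- Verifier strategies (valid at verifier nodes). -/
abbrev VStrat {S S' L : Type} (A : TS S L) (A' : TS S' L) (F : Set L) (m : L) :=
  {π : Strat (GS S S' L) L //
    ∀ h v, isRefB v = false → fullEdge A A' F m v (π h v).1 (π h v).2}

/-- The value of the quantitative masking game (the masking distance
`δ_m(A, A')`): sup over refuter strategies of the inf over verifier
strategies of the payoff of the outcome play. -/
noncomputable def maskingValue {S S' L : Type} (A : TS S L) (A' : TS S' L)
    (F : Set L) (m : L) : ℝ :=
  ⨆ πR : RStrat A A' F m, ⨅ πV : VStrat A A' F m,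
    payoff F GS.err
      (outSt isRefB πR.1 πV.1 (GS.R A.init A'.init))
      (outLb isRefB πR.1 πV.1 (GS.R A.init A'.init))

/-!
If the refuter of the game for `(A, A')` can reach the error state without ever moving to a
fault node, then `δ_m(A, A') = 1` and the inequality holds because every masking distance lies in
`[0, 1]`. Otherwise the pairs `(s, s')` whose refuter node lies outside this fault-free attractor
form a bisimulation between `A` and `A'` on non-fault labels. Then `δ_m(A, A'') ≤ δ_m(A', A'')`:
a refuter strategy for `(A, A'')` is turned into one for `(A', A'')` by replacing each move of `A`
with a bisimilar move of `A'`, and each verifier answer in `(A', A'')` is turned back into an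
answer in `(A, A'')`. The two plays see the same faults, and the first one reaches the error state
only when the second one does, so the first payoff is at most the second.
-/

open Filter

section Payoff

variable {α L : Type} (F : Set L)

open Classical in
noncomputable def faultCount (σ : ℕ → L) (N : ℕ) : ℝ :=
  ∑ i ∈ Finset.range N, if σ i ∈ F then (1 : ℝ) else 0

lemma faultCount_nonneg (σ : ℕ → L) (N : ℕ) : 0 ≤ faultCount F σ N :=
  Finset.sum_nonneg fun _ _ => by split_ifs <;> norm_num

lemma faultCount_mono (σ : ℕ → L) {N N' : ℕ} (h : N ≤ N') :
    faultCount F σ N ≤ faultCount F σ N' :=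
  Finset.sum_le_sum_of_subset_of_nonneg (Finset.range_subset_range.2 h)
    fun _ _ _ => by split_ifs <;> norm_num

lemma faultCount_eq_of_not_mem {σ : ℕ → L} {N N' : ℕ} (h : N ≤ N')
    (hσ : ∀ i, N ≤ i → i < N' → σ i ∉ F) : faultCount F σ N' = faultCount F σ N := by
  unfold faultCount
  rw [← Finset.sum_range_add_sum_Ico _ h, add_eq_left]
  refine Finset.sum_eq_zero fun i hi => ?_
  rw [Finset.mem_Ico] at hi
  simp [hσ i hi.1 hi.2]

lemma faultCount_congr {σ σ' : ℕ → L} {N : ℕ} 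
    (h : ∀ i < N, (σ i ∈ F ↔ σ' i ∈ F)) :
    faultCount F σ N = faultCount F σ' N :=
  Finset.sum_congr rfl fun i hi => by
    have := h i (Finset.mem_range.1 hi)
    split_ifs <;> tauto

variable {F} {verr : α} {ρ : ℕ → α} {σ : ℕ → L}

lemma payoff_eq_zero (h : ∀ n, ρ (n+1) ≠ verr) : payoff F verr ρ σ = 0 := by
  simp only [payoff, h, if_false, zero_div]
  exact tendsto_const_nhds.limUnder_eq

lemma payoff_eq_of_absorbing (N : ℕ) (h : ∀ i, N ≤ i → ρ (i+1) = verr ∧ σ i ∉ F) :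
    payoff F verr ρ σ = 1 / (1 + faultCount F σ N) := by
  refine Tendsto.limUnder_eq (tendsto_const_nhds.congr' ?_)
  filter_upwards [eventually_ge_atTop N] with n hn
  rw [if_pos (h n hn).1]
  change _ = 1 / (1 + faultCount F σ (n+1))
  rw [faultCount_eq_of_not_mem F (N' := n+1) (by omega) fun i hi _ => (h i hi).2]

end Payoff

section GameGraph

variable {SA SB L : Type} {X : TS SA L} {Y : TS SB L} {F : Set L} {m : L}
  {v w : GS SA SB L} {l : L}

lemma fullEdge.gEdge (h : fullEdge X Y F m v l w) (hw : w ≠ .err) : GEdge X Y F m v l w :=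
  h.resolve_right fun h' => hw h'.2.2.2

lemma fullEdge.gEdge_of_gEdge (h : fullEdge X Y F m v l w) {l' : L} {w' : GS SA SB L}
    (h' : GEdge X Y F m v l' w') : GEdge X Y F m v l w :=
  h.resolve_right fun hno => hno.1 l' w' h'

lemma fullEdge_err (h : fullEdge X Y F m .err l w) : l ∉ F ∧ w = .err := by
  rcases h with h | ⟨-, hl, -, hw⟩
  · cases h
  · exact ⟨hl, hw⟩

lemma fullEdge.isRefB_and_isFaultV (hm : m ∉ F) (h : fullEdge X Y F m v l w) (hl : l ∈ F) :
    isRefB v = true ∧ isFaultV F w := by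
  rcases h with h | ⟨-, hl', -, -⟩
  · cases h with
    | chA' => exact ⟨rfl, hl⟩
    | mask => exact absurd hl hm
    | _ => contradiction
  · exact absurd hl hl'

lemma fullEdge.not_mem_of_isRefB_false (hm : m ∉ F) (h : fullEdge X Y F m v l w)
    (hv : isRefB v = false) : l ∉ F := fun hl => by
  simpa [hv] using (h.isRefB_and_isFaultV hm hl).1

variable (X Y F m)

lemma exists_fullEdge (hne : ∃ σ, σ ∉ F ∧ σ ≠ m) (v : GS SA SB L) :
    ∃ lw : L × GS SA SB L, fullEdge X Y F m v lw.1 lw.2 := by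
  by_cases hg : ∃ l w, GEdge X Y F m v l w
  · obtain ⟨l, w, hg⟩ := hg
    exact ⟨(l, w), Or.inl hg⟩
  · push Not at hg
    obtain ⟨σ, hσF, hσm⟩ := hne
    exact ⟨(σ, .err), Or.inr ⟨hg, hσF, hσm, rfl⟩⟩

open Classical in
noncomputable def defaultMove (v : GS SA SB L) : L × GS SA SB L :=
  if h : ∃ lw : L × GS SA SB L, fullEdge X Y F m v lw.1 lw.2 then h.choose else (m, v)

open Classical in
noncomputable def chooseMove (P : L × GS SA SB L → Prop) (v : GS SA SB L) : L × GS SA SB L :=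
  if h : ∃ lw : L × GS SA SB L, fullEdge X Y F m v lw.1 lw.2 ∧ P lw then h.choose
  else defaultMove X Y F m v

variable {X Y F m}

lemma fullEdge_defaultMove (hne : ∃ σ, σ ∉ F ∧ σ ≠ m) (v : GS SA SB L) :
    fullEdge X Y F m v (defaultMove X Y F m v).1 (defaultMove X Y F m v).2 := by
  rw [defaultMove, dif_pos (exists_fullEdge X Y F m hne v)]
  exact (exists_fullEdge X Y F m hne v).choose_spec

lemma fullEdge_chooseMove (hne : ∃ σ, σ ∉ F ∧ σ ≠ m) (P : L × GS SA SB L → Prop)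
    (v : GS SA SB L) :
    fullEdge X Y F m v (chooseMove X Y F m P v).1 (chooseMove X Y F m P v).2 := by
  unfold chooseMove
  split
  · next h => exact h.choose_spec.1
  · exact fullEdge_defaultMove hne v

lemma chooseMove_spec {P : L × GS SA SB L → Prop} {v : GS SA SB L}
    (h : ∃ lw : L × GS SA SB L, fullEdge X Y F m v lw.1 lw.2 ∧ P lw) :
    P (chooseMove X Y F m P v) := by
  rw [chooseMove, dif_pos h]
  exact h.choose_spec.2

variable {v₀ : GS SA SB L} {ρ : ℕ → GS SA SB L} {σ : ℕ → L}

lemma IsPlay.err_absorbing (hp : IsPlay (fullEdge X Y F m) v₀ ρ σ) {N : ℕ}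
    (hN : ρ N = .err) :
    ∀ i, N ≤ i → ρ i = .err ∧ σ i ∉ F := by
  have step : ∀ i, ρ i = .err → σ i ∉ F ∧ ρ (i+1) = .err := fun i hi =>
    fullEdge_err (hi ▸ hp.2 i)
  intro i hi
  induction i, hi using Nat.le_induction with
  | base => exact ⟨hN, (step N hN).1⟩
  | succ i _ ih =>
    have hi' := (step i ih.1).2
    exact ⟨hi', (step (i+1) hi').1⟩

lemma IsPlay.payoff_eq (hp : IsPlay (fullEdge X Y F m) v₀ ρ σ) {N : ℕ} (hN : ρ N = .err) :
    payoff F .err ρ σ = 1 / (1 + faultCount F σ N) :=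
  payoff_eq_of_absorbing N fun i hi =>
    ⟨(hp.err_absorbing hN (i+1) (by omega)).1, (hp.err_absorbing hN i hi).2⟩

lemma IsPlay.payoff_nonneg_and_le_one (hp : IsPlay (fullEdge X Y F m) v₀ ρ σ) :
    0 ≤ payoff F .err ρ σ ∧ payoff F .err ρ σ ≤ 1 := by
  by_cases h : ∃ N, ρ N = .err
  · obtain ⟨N, hN⟩ := h
    have := faultCount_nonneg F σ N
    rw [hp.payoff_eq hN, div_le_one (by linarith)]
    exact ⟨by positivity, by linarith⟩
  · push Not at h
    rw [payoff_eq_zero fun n => h (n+1)]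
    norm_num

end GameGraph

section Outcome

variable {α L : Type} (isRef : α → Bool) (πR πV : Strat α L) (v₀ : α)

lemma hist_succ (ρ : ℕ → α) (σ : ℕ → L) (n : ℕ) :
    hist ρ σ (n+1) = hist ρ σ n ++ [(ρ n, σ n)] := by
  simp [hist, List.range_succ]

lemma hist_length (ρ : ℕ → α) (σ : ℕ → L) (n : ℕ) : (hist ρ σ n).length = n := by
  simp [hist]

lemma outAux_fst (n : ℕ) :
    (outAux isRef πR πV v₀ n).1 =
      hist (outSt isRef πR πV v₀) (outLb isRef πR πV v₀) n := by
  induction n with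
  | zero => rfl
  | succ n ih => rw [hist_succ, ← ih]; rfl

lemma outcome_step (n : ℕ) :
    (outLb isRef πR πV v₀ n, outSt isRef πR πV v₀ (n+1)) =
      if isRef (outSt isRef πR πV v₀ n) = true then
        πR (hist (outSt isRef πR πV v₀) (outLb isRef πR πV v₀) n)
          (outSt isRef πR πV v₀ n)
      else
        πV (hist (outSt isRef πR πV v₀) (outLb isRef πR πV v₀) n)
          (outSt isRef πR πV v₀ n) := by
  rw [← outAux_fst]
  rfl

lemma conf_outcome_refuter :
    Conf isRef true πR (outSt isRef πR πV v₀) (outLb isRef πR πV v₀) :=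
  fun n hn => by rw [outcome_step, if_pos hn]

lemma conf_outcome_verifier :
    Conf isRef false πV (outSt isRef πR πV v₀) (outLb isRef πR πV v₀) :=
  fun n hn => by rw [outcome_step, if_neg (by simp [hn])]

lemma outcome_eq_of_conf {ρ : ℕ → α} {σ : ℕ → L} (h₀ : ρ 0 = v₀)
    (hR : Conf isRef true πR ρ σ) (hV : Conf isRef false πV ρ σ) :
    outSt isRef πR πV v₀ = ρ ∧ outLb isRef πR πV v₀ = σ := by
  have move : ∀ n, (σ n, ρ (n+1)) = if isRef (ρ n) = true
      then πR (hist ρ σ n) (ρ n) else πV (hist ρ σ n) (ρ n) := fun n => by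
    cases hn : isRef (ρ n)
    · exact hV n hn
    · exact hR n hn
  have step : ∀ n, outSt isRef πR πV v₀ n = ρ n →
      hist (outSt isRef πR πV v₀) (outLb isRef πR πV v₀) n = hist ρ σ n →
      outLb isRef πR πV v₀ n = σ n ∧ outSt isRef πR πV v₀ (n+1) = ρ (n+1) :=
    fun n h₁ h₂ => by
    have h := outcome_step isRef πR πV v₀ n
    rw [h₁, h₂, ← move] at h
    exact Prod.ext_iff.1 h
  have key : ∀ n, outSt isRef πR πV v₀ n = ρ n ∧
      hist (outSt isRef πR πV v₀) (outLb isRef πR πV v₀) n = hist ρ σ n := by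
    intro n
    induction n with
    | zero => exact ⟨h₀.symm, rfl⟩
    | succ n ih =>
      obtain ⟨hlb, hst⟩ := step n ih.1 ih.2
      exact ⟨hst, by rw [hist_succ, hist_succ, ih.2, ih.1, hlb]⟩
  exact ⟨funext fun n => (key n).1, funext fun n => (step n (key n).1 (key n).2).1⟩

lemma isPlay_outcome {E : α → L → α → Prop}
    (hR : ∀ h v, isRef v = true → E v (πR h v).1 (πR h v).2)
    (hV : ∀ h v, isRef v = false → E v (πV h v).1 (πV h v).2) :
    IsPlay E v₀ (outSt isRef πR πV v₀) (outLb isRef πR πV v₀) := by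
  refine ⟨rfl, fun n => ?_⟩
  cases hn : isRef (outSt isRef πR πV v₀ n)
  · have h := conf_outcome_verifier isRef πR πV v₀ n hn
    simp only [Prod.ext_iff] at h
    rw [h.1, h.2]
    exact hV _ _ hn
  · have h := conf_outcome_refuter isRef πR πV v₀ n hn
    simp only [Prod.ext_iff] at h
    rw [h.1, h.2]
    exact hR _ _ hn

/-- Replays the moves recorded in the history `h` that ended in `v`: on a history of length `k`
it plays the `k`-th recorded move (`junk` is only read past the end of `h`). -/
def replay (junk : L) (h : List (α × L)) (v : α) : Strat α L := fun h' _ =>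
  ((h.getD h'.length (v, junk)).2, (h.map Prod.fst ++ [v]).getD (h'.length + 1) v)

lemma replay_hist (junk : L) (ρ : ℕ → α) (σ : ℕ → L) {k n : ℕ} (hk : k < n)
    {h' : List (α × L)} (hh' : h'.length = k) (u : α) :
    replay junk (hist ρ σ n) (ρ n) h' u = (σ k, ρ (k+1)) := by
  have hmap : (hist ρ σ n).map Prod.fst ++ [ρ n] = (List.range (n+1)).map ρ := by
    simp [hist, List.range_succ]
  simp only [replay, hmap, hh']
  rw [List.getD_eq_getElem _ _ (by simp [hist_length, hk]),
    List.getD_eq_getElem _ _ (by simp; omega)]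
  simp [hist]

end Outcome

section JointRun

variable {α β L : Type}

structure JointCfg (α β L : Type) where
  pos₁ : α
  hist₁ : List (α × L)
  pos₂ : β
  hist₂ : List (β × L)

def JointCfg.advance (c : JointCfg α β L) (mv : (L × α) × (L × β)) : JointCfg α β L :=
  ⟨mv.1.2, c.hist₁ ++ [(c.pos₁, mv.1.1)], mv.2.2, c.hist₂ ++ [(c.pos₂, mv.2.1)]⟩

variable (next : JointCfg α β L → (L × α) × (L × β)) (v₀ : α) (w₀ : β)

def jointRun : ℕ → JointCfg α β L
  | 0 => ⟨v₀, [], w₀, []⟩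
  | n+1 => (jointRun n).advance (next (jointRun n))

lemma jointRun_hist₁ (n : ℕ) :
    (jointRun next v₀ w₀ n).hist₁ = hist (fun k => (jointRun next v₀ w₀ k).pos₁)
      (fun k => (next (jointRun next v₀ w₀ k)).1.1) n := by
  induction n with
  | zero => rfl
  | succ n ih => rw [hist_succ, ← ih]; rfl

lemma jointRun_hist₂ (n : ℕ) :
    (jointRun next v₀ w₀ n).hist₂ = hist (fun k => (jointRun next v₀ w₀ k).pos₂)
      (fun k => (next (jointRun next v₀ w₀ k)).2.1) n := by
  induction n with
  | zero => rfl
  | succ n ih => rw [hist_succ, ← ih]; rfl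

lemma jointRun_hist₂_length (n : ℕ) : (jointRun next v₀ w₀ n).hist₂.length = n := by
  rw [jointRun_hist₂, hist_length]

lemma jointRun_congr {next' : JointCfg α β L → (L × α) × (L × β)} {n : ℕ}
    (h : ∀ k < n, next' (jointRun next v₀ w₀ k) = next (jointRun next v₀ w₀ k)) :
    jointRun next' v₀ w₀ n = jointRun next v₀ w₀ n := by
  induction n with
  | zero => rfl
  | succ n ih =>
    simp only [jointRun, ih fun k hk => h k (by omega), h n (by omega)]

lemma outcome_eq_jointRun₁ (isRef : α → Bool) (πR πV : Strat α L)
    (hR : ∀ n, isRef (jointRun next v₀ w₀ n).pos₁ = true →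
      (next (jointRun next v₀ w₀ n)).1 =
        πR (jointRun next v₀ w₀ n).hist₁ (jointRun next v₀ w₀ n).pos₁)
    (hV : ∀ n, isRef (jointRun next v₀ w₀ n).pos₁ = false →
      (next (jointRun next v₀ w₀ n)).1 =
        πV (jointRun next v₀ w₀ n).hist₁ (jointRun next v₀ w₀ n).pos₁) :
    outSt isRef πR πV v₀ = (fun n => (jointRun next v₀ w₀ n).pos₁) ∧
      outLb isRef πR πV v₀ = fun n => (next (jointRun next v₀ w₀ n)).1.1 :=
  outcome_eq_of_conf isRef πR πV v₀ rfl
    (fun n hn => by rw [← jointRun_hist₁, ← hR n hn]; rfl)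
    (fun n hn => by rw [← jointRun_hist₁, ← hV n hn]; rfl)

lemma outcome_eq_jointRun₂ (isRef : β → Bool) (πR πV : Strat β L)
    (hR : ∀ n, isRef (jointRun next v₀ w₀ n).pos₂ = true →
      (next (jointRun next v₀ w₀ n)).2 =
        πR (jointRun next v₀ w₀ n).hist₂ (jointRun next v₀ w₀ n).pos₂)
    (hV : ∀ n, isRef (jointRun next v₀ w₀ n).pos₂ = false →
      (next (jointRun next v₀ w₀ n)).2 =
        πV (jointRun next v₀ w₀ n).hist₂ (jointRun next v₀ w₀ n).pos₂) :
    outSt isRef πR πV w₀ = (fun n => (jointRun next v₀ w₀ n).pos₂) ∧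
      outLb isRef πR πV w₀ = fun n => (next (jointRun next v₀ w₀ n)).2.1 :=
  outcome_eq_of_conf isRef πR πV w₀ rfl
    (fun n hn => by rw [← jointRun_hist₂, ← hR n hn]; rfl)
    (fun n hn => by rw [← jointRun_hist₂, ← hV n hn]; rfl)

end JointRun

section Value

variable {SA SB L : Type} {X : TS SA L} {Y : TS SB L} {F : Set L} {m : L}

noncomputable def outcomePayoff (πR : RStrat X Y F m) (πV : VStrat X Y F m) : ℝ :=
  payoff F GS.err (outSt isRefB πR.1 πV.1 (GS.R X.init Y.init))
    (outLb isRefB πR.1 πV.1 (GS.R X.init Y.init))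

lemma isPlay_outcome_strat (πR : RStrat X Y F m) (πV : VStrat X Y F m) :
    IsPlay (fullEdge X Y F m) (GS.R X.init Y.init)
      (outSt isRefB πR.1 πV.1 (GS.R X.init Y.init))
      (outLb isRefB πR.1 πV.1 (GS.R X.init Y.init)) :=
  isPlay_outcome isRefB πR.1 πV.1 _ πR.2 πV.2

lemma outcomePayoff_nonneg (πR : RStrat X Y F m) (πV : VStrat X Y F m) :
    0 ≤ outcomePayoff πR πV :=
  (isPlay_outcome_strat πR πV).payoff_nonneg_and_le_one.1

lemma outcomePayoff_le_one (πR : RStrat X Y F m) (πV : VStrat X Y F m) :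
    outcomePayoff πR πV ≤ 1 :=
  (isPlay_outcome_strat πR πV).payoff_nonneg_and_le_one.2

lemma bddBelow_range_outcomePayoff (πR : RStrat X Y F m) :
    BddBelow (Set.range fun πV => outcomePayoff πR πV) :=
  ⟨0, by rintro _ ⟨πV, rfl⟩; exact outcomePayoff_nonneg πR πV⟩

variable (X Y F m) (hne : ∃ σ, σ ∉ F ∧ σ ≠ m)
include hne

lemma RStrat.nonempty : Nonempty (RStrat X Y F m) :=
  ⟨⟨fun _ v => defaultMove X Y F m v, fun _ v _ => fullEdge_defaultMove hne v⟩⟩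

lemma VStrat.nonempty : Nonempty (VStrat X Y F m) :=
  ⟨⟨fun _ v => defaultMove X Y F m v, fun _ v _ => fullEdge_defaultMove hne v⟩⟩

lemma iInf_outcomePayoff_le_one (πR : RStrat X Y F m) : ⨅ πV, outcomePayoff πR πV ≤ 1 :=
  have := VStrat.nonempty X Y F m hne
  (ciInf_le (bddBelow_range_outcomePayoff πR) (Classical.arbitrary _)).trans
    (outcomePayoff_le_one _ _)

lemma bddAbove_range_iInf_outcomePayoff :
    BddAbove (Set.range fun πR : RStrat X Y F m => ⨅ πV, outcomePayoff πR πV) :=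
  ⟨1, by rintro _ ⟨πR, rfl⟩; exact iInf_outcomePayoff_le_one X Y F m hne πR⟩

lemma maskingValue_le_one : maskingValue X Y F m ≤ 1 :=
  have := RStrat.nonempty X Y F m hne
  ciSup_le (iInf_outcomePayoff_le_one X Y F m hne)

variable {X Y F m}

lemma le_maskingValue {c : ℝ} (πR : RStrat X Y F m) (h : ∀ πV, c ≤ outcomePayoff πR πV) :
    c ≤ maskingValue X Y F m :=
  have := VStrat.nonempty X Y F m hne
  (le_ciInf h).trans (le_ciSup (bddAbove_range_iInf_outcomePayoff X Y F m hne) πR)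

variable (X Y F m) in
lemma maskingValue_nonneg : 0 ≤ maskingValue X Y F m :=
  have := RStrat.nonempty X Y F m hne
  le_maskingValue hne (Classical.arbitrary _) fun πV => outcomePayoff_nonneg _ πV

end Value

section Comparison

variable {SA SB SC SD L : Type} {X : TS SA L} {Y : TS SB L} {X' : TS SC L} {Y' : TS SD L}
  {F : Set L} {m m' : L}

lemma payoff_le_payoff {v₀ : GS SA SB L} {ρ : ℕ → GS SA SB L} {σ : ℕ → L}
    {w₀ : GS SC SD L} {ρ' : ℕ → GS SC SD L} {σ' : ℕ → L}
    (hp : IsPlay (fullEdge X Y F m) v₀ ρ σ) (hp' : IsPlay (fullEdge X' Y' F m') w₀ ρ' σ')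
    (hsync : ∀ n, ρ' n ≠ .err →
      (σ n ∈ F ↔ σ' n ∈ F) ∧ (ρ (n+1) = .err → ρ' (n+1) = .err)) :
    payoff F .err ρ σ ≤ payoff F .err ρ' σ' := by
  classical
  by_cases h' : ∃ T, ρ' T = .err
  · have hT := Nat.find_spec h'
    have halive : ∀ k < Nat.find h', ρ' k ≠ .err := fun k hk => Nat.find_min h' hk
    rw [hp'.payoff_eq hT]
    by_cases h : ∃ N, ρ N = .err
    · obtain ⟨N, hN⟩ := h
      have hN' := (hp.err_absorbing hN (max N (Nat.find h')) (le_max_left _ _)).1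
      rw [hp.payoff_eq hN', ← faultCount_congr F fun k hk => (hsync k (halive k hk)).1]
      have := faultCount_nonneg F σ (Nat.find h')
      have := faultCount_mono F σ (le_max_right N (Nat.find h'))
      gcongr
    · push Not at h
      rw [payoff_eq_zero fun n => h (n+1)]
      have := faultCount_nonneg F σ' (Nat.find h')
      positivity
  · push Not at h'
    rw [payoff_eq_zero fun n => h' (n+1),
      payoff_eq_zero fun n hn => h' (n+1) ((hsync n (h' n)).2 hn)]

lemma maskingValue_le_maskingValue (hne : ∃ σ, σ ∉ F ∧ σ ≠ m) (hne' : ∃ σ, σ ∉ F ∧ σ ≠ m')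
    (h : ∀ πR : RStrat X Y F m, ∃ πR' : RStrat X' Y' F m', ∀ πV' : VStrat X' Y' F m',
      ∃ πV : VStrat X Y F m, outcomePayoff πR πV ≤ outcomePayoff πR' πV') :
    maskingValue X Y F m ≤ maskingValue X' Y' F m' := by
  have := RStrat.nonempty X Y F m hne
  refine ciSup_le fun πR => ?_
  obtain ⟨πR', hπR'⟩ := h πR
  refine le_maskingValue hne' πR' fun πV' => ?_
  obtain ⟨πV, hπV⟩ := hπR' πV'
  exact (ciInf_le (bddBelow_range_outcomePayoff πR) πV).trans hπV

end Comparison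

instance GS.finite {SA SB L : Type} [Finite SA] [Finite SB] [Finite L] :
    Finite (GS SA SB L) :=
  Finite.of_injective (β := (SA × SB) ⊕ (SA × L × Bool × SB) ⊕ Unit)
    (fun
      | .R a b => .inl (a, b)
      | .V a l b c => .inr (.inl (a, l, b, c))
      | .err => .inr (.inr ()))
    (by intro v w h; cases v <;> cases w <;> simp_all)

def IsFaultFreeBisim {S S' L : Type} (A : TS S L) (A' : TS S' L) (F : Set L) (m : L)
    (M : S → S' → Prop) : Prop :=
  M A.init A'.init ∧ ∀ s s', M s s' → ∀ σ, σ ∉ F → σ ≠ m →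
    (∀ t, A.step s σ t → ∃ t', A'.step s' σ t' ∧ M t t') ∧
    (∀ t', A'.step s' σ t' → ∃ t, A.step s σ t ∧ M t t')

lemma IsFaultFreeBisim.mono {S S' L : Type} {A : TS S L} {A' : TS S' L} {F F' : Set L} {m : L}
    {M : S → S' → Prop} (hM : IsFaultFreeBisim A A' F m M) (hF : F ⊆ F') :
    IsFaultFreeBisim A A' F' m M :=
  ⟨hM.1, fun s s' hs σ hσ => hM.2 s s' hs σ fun h => hσ (hF h)⟩

section Attractor

variable {SA SB L : Type} (X : TS SA L) (Y : TS SB L) (F : Set L) (m : L)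

def attractorStep (T : Set (GS SA SB L)) : Set (GS SA SB L) :=
  {.err} ∪
  {v | isRefB v = true ∧ ∃ l w, fullEdge X Y F m v l w ∧ ¬ isFaultV F w ∧ w ∈ T} ∪
  {v | isRefB v = false ∧ ∀ l w, fullEdge X Y F m v l w → w ∈ T}

def attractorLevel : ℕ → Set (GS SA SB L)
  | 0 => ∅
  | n+1 => attractorStep X Y F m (attractorLevel n)

def attractor : Set (GS SA SB L) := ⋃ n, attractorLevel X Y F m n

noncomputable def attractorRank (v : GS SA SB L) : ℕ := sInf {n | v ∈ attractorLevel X Y F m n}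

variable {X Y F m}

lemma attractorStep_mono : Monotone (attractorStep X Y F m) := by
  rintro T T' hT v ((hv | ⟨h1, l, w, he, hf, hw⟩) | ⟨h1, h2⟩)
  · exact .inl (.inl hv)
  · exact .inl (.inr ⟨h1, l, w, he, hf, hT hw⟩)
  · exact .inr ⟨h1, fun l w he => hT (h2 l w he)⟩

lemma attractorLevel_mono : Monotone (attractorLevel X Y F m) := by
  refine monotone_nat_of_le_succ fun n => ?_
  induction n with
  | zero => exact Set.empty_subset _
  | succ n ih => exact attractorStep_mono ih

lemma err_mem_attractor : (GS.err : GS SA SB L) ∈ attractor X Y F m :=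
  Set.mem_iUnion.2 ⟨1, .inl (.inl rfl)⟩

lemma mem_attractorLevel_attractorRank {v : GS SA SB L} (hv : v ∈ attractor X Y F m) :
    v ∈ attractorLevel X Y F m (attractorRank X Y F m v) :=
  Nat.sInf_mem (Set.mem_iUnion.1 hv)

lemma attractorRank_le {v : GS SA SB L} {n : ℕ} (hv : v ∈ attractorLevel X Y F m n) :
    attractorRank X Y F m v ≤ n :=
  Nat.sInf_le hv

lemma mem_attractor_of_isRefB {v w : GS SA SB L} {l : L} (hv : isRefB v = true)
    (he : fullEdge X Y F m v l w) (hf : ¬ isFaultV F w) (hw : w ∈ attractor X Y F m) :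
    v ∈ attractor X Y F m :=
  Set.mem_iUnion.2 ⟨attractorRank X Y F m w + 1,
    .inl (.inr ⟨hv, l, w, he, hf, mem_attractorLevel_attractorRank hw⟩)⟩

lemma mem_attractor_of_forall [Finite SA] [Finite SB] [Finite L] {v : GS SA SB L}
    (hv : isRefB v = false) (h : ∀ l w, fullEdge X Y F m v l w → w ∈ attractor X Y F m) :
    v ∈ attractor X Y F m := by
  obtain ⟨N, hN⟩ := Finite.exists_le (attractorRank X Y F m)
  exact Set.mem_iUnion.2 ⟨N + 1, .inr ⟨hv, fun l w he =>
    attractorLevel_mono (hN w) (mem_attractorLevel_attractorRank (h l w he))⟩⟩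

lemma exists_attractorRank_eq_succ {v : GS SA SB L} (hv : v ∈ attractor X Y F m) :
    ∃ k, attractorRank X Y F m v = k + 1 ∧
      v ∈ attractorStep X Y F m (attractorLevel X Y F m k) := by
  have h := mem_attractorLevel_attractorRank hv
  rcases hk : attractorRank X Y F m v with _ | k
  · rw [hk] at h
    exact absurd h (Set.notMem_empty v)
  · rw [hk] at h
    exact ⟨k, rfl, h⟩

lemma isFaultFreeBisim_of_not_mem_attractor [Finite SA] [Finite SB] [Finite L]
    (hinit : GS.R X.init Y.init ∉ attractor X Y F m) :
    IsFaultFreeBisim X Y F m fun s s' => GS.R s s' ∉ attractor X Y F m := by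
  have escape : ∀ v : GS SA SB L, isRefB v = false → v ∉ attractor X Y F m →
      ∃ l w, GEdge X Y F m v l w ∧ w ∉ attractor X Y F m := fun v hv hnot => by
    by_contra! h
    refine hnot (mem_attractor_of_forall hv fun l w he => ?_)
    by_cases hw : w = .err
    · exact hw ▸ err_mem_attractor
    · exact h l w (he.gEdge hw)
  refine ⟨hinit, fun s s' hs σ hσF hσm => ⟨fun t hst => ?_, fun t' hst' => ?_⟩⟩
  · have hV : GS.V t σ true s' ∉ attractor X Y F m := fun h =>
      hs (mem_attractor_of_isRefB rfl (.inl (.chA hσF hσm hst)) hσF h)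
    obtain ⟨l, w, he, hw⟩ := escape _ rfl hV
    cases he with
    | matchA' _ _ hst' => exact ⟨_, hst', hw⟩
  · have hV : GS.V s σ false t' ∉ attractor X Y F m := fun h =>
      hs (mem_attractor_of_isRefB rfl (.inl (.chA' hσm hst')) hσF h)
    obtain ⟨l, w, he, hw⟩ := escape _ rfl hV
    cases he with
    | matchA _ _ hst => exact ⟨_, hst, hw⟩
    | mask hσF' => exact absurd hσF' hσF

end Attractor

section AttractorStrategy

variable {SA SB L : Type} (X : TS SA L) (Y : TS SB L) (F : Set L) (m : L)

noncomputable def attractorMove (v : GS SA SB L) : L × GS SA SB L :=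
  chooseMove X Y F m (fun lw => ¬ isFaultV F lw.2 ∧ lw.2 ∈ attractor X Y F m ∧
    attractorRank X Y F m lw.2 < attractorRank X Y F m v) v

noncomputable def attractorStrategy (hne : ∃ σ, σ ∉ F ∧ σ ≠ m) : RStrat X Y F m :=
  ⟨fun _ v => attractorMove X Y F m v, fun _ v _ => fullEdge_chooseMove hne _ v⟩

variable {X Y F m}

lemma attractorMove_spec {v : GS SA SB L} (hv : v ∈ attractor X Y F m) (href : isRefB v = true)
    (herr : v ≠ .err) :
    ¬ isFaultV F (attractorMove X Y F m v).2 ∧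
      (attractorMove X Y F m v).2 ∈ attractor X Y F m ∧
      attractorRank X Y F m (attractorMove X Y F m v).2 < attractorRank X Y F m v := by
  obtain ⟨k, hk, (hv' | ⟨-, l, w, he, hf, hw⟩) | ⟨hver, -⟩⟩ :=
    exists_attractorRank_eq_succ hv
  · exact absurd hv' herr
  · exact chooseMove_spec (P := fun lw : L × GS SA SB L => ¬ isFaultV F lw.2 ∧
      lw.2 ∈ attractor X Y F m ∧ attractorRank X Y F m lw.2 < attractorRank X Y F m v)
      ⟨(l, w), he, hf, Set.mem_iUnion.2 ⟨k, hw⟩,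
        hk ▸ Nat.lt_succ_of_le (attractorRank_le hw)⟩
  · simp [href] at hver

lemma attractorRank_lt_of_isRefB_false {v w : GS SA SB L} {l : L}
    (hv : v ∈ attractor X Y F m) (hver : isRefB v = false) (he : fullEdge X Y F m v l w) :
    w ∈ attractor X Y F m ∧ attractorRank X Y F m w < attractorRank X Y F m v := by
  obtain ⟨k, hk, (hv' | ⟨href, -⟩) | ⟨-, hall⟩⟩ := exists_attractorRank_eq_succ hv
  · simp [show v = .err from hv', isRefB] at hver
  · simp [href] at hver
  · exact ⟨Set.mem_iUnion.2 ⟨k, hall l w he⟩,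
      hk ▸ Nat.lt_succ_of_le (attractorRank_le (hall l w he))⟩

lemma IsPlay.attractor_invariant (hm : m ∉ F) {v₀ : GS SA SB L} {ρ : ℕ → GS SA SB L}
    {σ : ℕ → L} (hp : IsPlay (fullEdge X Y F m) v₀ ρ σ)
    (hconf : MemConf isRefB true (attractorMove X Y F m) ρ σ)
    {n : ℕ} (hn : ρ n ∈ attractor X Y F m) :
    σ n ∉ F ∧ ρ (n+1) ∈ attractor X Y F m ∧
      (ρ n ≠ .err → attractorRank X Y F m (ρ (n+1)) < attractorRank X Y F m (ρ n)) := by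
  by_cases herr : ρ n = .err
  · obtain ⟨hσ, hρ⟩ := fullEdge_err (herr ▸ hp.2 n)
    exact ⟨hσ, hρ ▸ err_mem_attractor, fun h => absurd herr h⟩
  cases href : isRefB (ρ n)
  · obtain ⟨hmem, hlt⟩ := attractorRank_lt_of_isRefB_false hn href (hp.2 n)
    exact ⟨(hp.2 n).not_mem_of_isRefB_false hm href, hmem, fun _ => hlt⟩
  · have hmove := hconf n href
    simp only [Prod.ext_iff] at hmove
    obtain ⟨hf, hmem, hlt⟩ := attractorMove_spec hn href herr
    rw [← hmove.2] at hf hmem hlt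
    exact ⟨fun hσ => hf ((hp.2 n).isRefB_and_isFaultV hm hσ).2, hmem, fun _ => hlt⟩

lemma outcomePayoff_attractorStrategy (hm : m ∉ F) (hne : ∃ σ, σ ∉ F ∧ σ ≠ m)
    (hinit : GS.R X.init Y.init ∈ attractor X Y F m) (πV : VStrat X Y F m) :
    outcomePayoff (attractorStrategy X Y F m hne) πV = 1 := by
  set ρ := outSt isRefB (attractorStrategy X Y F m hne).1 πV.1 (GS.R X.init Y.init)
  set σ := outLb isRefB (attractorStrategy X Y F m hne).1 πV.1 (GS.R X.init Y.init)
  have hp : IsPlay (fullEdge X Y F m) _ ρ σ := isPlay_outcome_strat _ πV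
  have hconf : MemConf isRefB true (attractorMove X Y F m) ρ σ :=
    conf_outcome_refuter isRefB _ πV.1 _
  have hmem : ∀ n, ρ n ∈ attractor X Y F m := fun n => by
    induction n with
    | zero => exact hinit
    | succ n ih => exact (hp.attractor_invariant hm hconf ih).2.1
  have herr : ∃ N, ρ N = .err := by
    by_contra! h
    have hdrop : ∀ n, attractorRank X Y F m (ρ n) + n ≤ attractorRank X Y F m (ρ 0) := by
      intro n
      induction n with
      | zero => omega
      | succ n ih => have := (hp.attractor_invariant hm hconf (hmem n)).2.2 (h n); omega
    have := hdrop (attractorRank X Y F m (ρ 0) + 1)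
    omega
  obtain ⟨N, hN⟩ := herr
  have hfree : faultCount F σ N = 0 :=
    (faultCount_eq_of_not_mem F (Nat.zero_le N) fun i _ _ =>
      (hp.attractor_invariant hm hconf (hmem i)).1).trans (by simp [faultCount])
  rw [outcomePayoff, hp.payoff_eq hN, hfree]
  norm_num

lemma one_le_maskingValue_of_mem_attractor (hm : m ∉ F) (hne : ∃ σ, σ ∉ F ∧ σ ≠ m)
    (hinit : GS.R X.init Y.init ∈ attractor X Y F m) : 1 ≤ maskingValue X Y F m :=
  le_maskingValue hne (attractorStrategy X Y F m hne) fun πV =>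
    (outcomePayoff_attractorStrategy hm hne hinit πV).ge

end AttractorStrategy

section Coupling

variable {S S' S'' L : Type}

inductive Coupled (M : S → S' → Prop) : GS S S'' L → GS S' S'' L → Prop
  | err (v : GS S S'' L) : Coupled M v .err
  | R {s s' s''} : M s s' → Coupled M (.R s s'') (.R s' s'')
  | V {s s' σ b s''} : M s s' → Coupled M (.V s σ b s'') (.V s' σ b s'')

def CoupledMoves (M : S → S' → Prop) (F : Set L) (c : L × GS S S'' L) (d : L × GS S' S'' L) :
    Prop :=
  (c.1 ∈ F ↔ d.1 ∈ F) ∧ (c.2 = .err → d.2 = .err) ∧ Coupled M c.2 d.2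

variable {A : TS S L} {A' : TS S' L} {A'' : TS S'' L} {F : Set L} {m : L} {M : S → S' → Prop}
  {v : GS S S'' L} {v₂ : GS S' S'' L}

lemma Coupled.isRefB_eq (hc : Coupled M v v₂) (hv₂ : v₂ ≠ .err) :
    isRefB v = isRefB v₂ := by
  cases hc
  · exact absurd rfl hv₂
  all_goals rfl

lemma Coupled.exists_refuter_answer (hA : ∀ s, ∃ e t, A.step s e t)
    (hSA : ∀ s e t, A.step s e t → e ∉ F ∧ e ≠ m) (hM : IsFaultFreeBisim A A' F m M)
    (hc : Coupled M v v₂) (hv₂ : v₂ ≠ .err) (hv : isRefB v = true) {c : L × GS S S'' L}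
    (he : fullEdge A A'' F m v c.1 c.2) :
    ∃ d : L × GS S' S'' L, fullEdge A' A'' F m v₂ d.1 d.2 ∧ CoupledMoves M F c d := by
  obtain ⟨l, w⟩ := c
  cases hc with
  | err => exact absurd rfl hv₂
  | V => simp [isRefB] at hv
  | @R s s' s'' hs =>
    obtain ⟨e, t, hst⟩ := hA s
    dsimp only at he
    cases he.gEdge_of_gEdge (.chA (hSA s e t hst).1 (hSA s e t hst).2 hst) with
    | chA hlF hlm hst =>
      obtain ⟨t', hst', ht⟩ := (hM.2 s s' hs l hlF hlm).1 _ hst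
      exact ⟨(l, .V t' l true s''), .inl (.chA hlF hlm hst'), Iff.rfl, by simp, .V ht⟩
    | chA' hlm hst =>
      exact ⟨(l, .V s' l false _), .inl (.chA' hlm hst), Iff.rfl, by simp, .V hs⟩

lemma Coupled.exists_verifier_answer (hm : m ∉ F) (hne : ∃ σ, σ ∉ F ∧ σ ≠ m)
    (hM : IsFaultFreeBisim A A' F m M) (hc : Coupled M v v₂) (hv₂ : v₂ ≠ .err)
    (hv : isRefB v = false) {d : L × GS S' S'' L} (he : fullEdge A' A'' F m v₂ d.1 d.2) :
    ∃ c : L × GS S S'' L, fullEdge A A'' F m v c.1 c.2 ∧ CoupledMoves M F c d := by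
  obtain ⟨l, w⟩ := d
  cases hc with
  | err => exact absurd rfl hv₂
  | R => simp [isRefB] at hv
  | @V s s' σ b s'' hs =>
    dsimp only at he
    by_cases hw : w = .err
    · have hdef := fullEdge_defaultMove (X := A) (Y := A'') hne (.V s σ b s'')
      exact ⟨_, hdef, iff_of_false (hdef.not_mem_of_isRefB_false hm rfl)
        (he.not_mem_of_isRefB_false hm rfl), fun _ => hw, hw ▸ .err _⟩
    cases he.gEdge hw with
    | matchA' hlF hlm hst =>
      exact ⟨(_, .R s _), .inl (.matchA' hlF hlm hst), Iff.rfl, by simp, .R hs⟩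
    | matchA hlF hlm hst' =>
      obtain ⟨t, hst, ht⟩ := (hM.2 s s' hs _ hlF hlm).2 _ hst'
      exact ⟨(_, .R t s''), .inl (.matchA hlF hlm hst), Iff.rfl, by simp, .R ht⟩
    | mask hσF => exact ⟨(_, .R s s''), .inl (.mask hσF), Iff.rfl, by simp, .R hs⟩

variable (A A' A'' F m M)

/-- One step of `G(A, A'')` and `G(A', A'')` played side by side: the refuter of the first game
and the verifier of the second play their strategies, and each of their moves is answered in the
other game by a coupled move whenever there is one. -/
noncomputable def coupledNext (πR : Strat (GS S S'' L) L) (πV₂ : Strat (GS S' S'' L) L)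
    (c : JointCfg (GS S S'' L) (GS S' S'' L) L) : (L × GS S S'' L) × (L × GS S' S'' L) :=
  let d := if isRefB c.pos₂ then
      chooseMove A' A'' F m (CoupledMoves M F (πR c.hist₁ c.pos₁)) c.pos₂
    else πV₂ c.hist₂ c.pos₂
  (if isRefB c.pos₁ then πR c.hist₁ c.pos₁
    else chooseMove A A'' F m (fun e => CoupledMoves M F e d) c.pos₁, d)

noncomputable abbrev coupledRun (πR : Strat (GS S S'' L) L) (πV₂ : Strat (GS S' S'' L) L) :
    ℕ → JointCfg (GS S S'' L) (GS S' S'' L) L :=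
  jointRun (coupledNext A A' A'' F m M πR πV₂) (.R A.init A''.init) (.R A'.init A''.init)

open Classical in
noncomputable def coupledVerifier (πR : Strat (GS S S'' L) L) (πV₂ : Strat (GS S' S'' L) L) :
    Strat (GS S S'' L) L := fun h v =>
  if (coupledRun A A' A'' F m M πR πV₂ h.length).pos₁ = v
  then (coupledNext A A' A'' F m M πR πV₂ (coupledRun A A' A'' F m M πR πV₂ h.length)).1
  else defaultMove A A'' F m v

open Classical in
/-- The refuter of `G(A', A'')` reconstructs the coupled run from its own history, replaying
the verifier moves recorded there. -/
noncomputable def coupledRefuter (πR : Strat (GS S S'' L) L) : Strat (GS S' S'' L) L :=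
  fun h₂ v₂ =>
    if (coupledRun A A' A'' F m M πR (replay m h₂ v₂) h₂.length).pos₂ = v₂
    then (coupledNext A A' A'' F m M πR (replay m h₂ v₂)
      (coupledRun A A' A'' F m M πR (replay m h₂ v₂) h₂.length)).2
    else defaultMove A' A'' F m v₂

variable {A A' A'' F m M} {πR : Strat (GS S S'' L) L} {πV₂ : Strat (GS S' S'' L) L}

lemma coupledNext_fst_of_isRefB {c : JointCfg (GS S S'' L) (GS S' S'' L) L}
    (hc : isRefB c.pos₁ = true) :
    (coupledNext A A' A'' F m M πR πV₂ c).1 = πR c.hist₁ c.pos₁ := by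
  simp [coupledNext, hc]

lemma coupledNext_snd_of_not_isRefB {c : JointCfg (GS S S'' L) (GS S' S'' L) L}
    (hc : isRefB c.pos₂ = false) :
    (coupledNext A A' A'' F m M πR πV₂ c).2 = πV₂ c.hist₂ c.pos₂ := by
  simp [coupledNext, hc]

lemma coupledNext_congr {πV₂' : Strat (GS S' S'' L) L}
    {c : JointCfg (GS S S'' L) (GS S' S'' L) L}
    (h : isRefB c.pos₂ = false →
      πV₂' c.hist₂ c.pos₂ = (coupledNext A A' A'' F m M πR πV₂ c).2) :
    coupledNext A A' A'' F m M πR πV₂' c = coupledNext A A' A'' F m M πR πV₂ c := by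
  cases hc : isRefB c.pos₂
  · have h' := h hc
    rw [coupledNext_snd_of_not_isRefB hc] at h'
    simp [coupledNext, hc, h']
  · simp [coupledNext, hc]

lemma outcome_coupledVerifier :
    outSt isRefB πR (coupledVerifier A A' A'' F m M πR πV₂) (.R A.init A''.init) =
        (fun n => (coupledRun A A' A'' F m M πR πV₂ n).pos₁) ∧
      outLb isRefB πR (coupledVerifier A A' A'' F m M πR πV₂) (.R A.init A''.init) =
        fun n =>
          (coupledNext A A' A'' F m M πR πV₂ (coupledRun A A' A'' F m M πR πV₂ n)).1.1 :=
  outcome_eq_jointRun₁ _ _ _ isRefB _ _ (fun _ hn => coupledNext_fst_of_isRefB hn)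
    fun n _ => by
      rw [coupledVerifier, jointRun_hist₁, hist_length, if_pos rfl]

lemma coupledRefuter_eq {h₂ : List (GS S' S'' L × L)} {v₂ : GS S' S'' L}
    (hrun : (coupledRun A A' A'' F m M πR (replay m h₂ v₂) h₂.length).pos₂ = v₂) :
    coupledRefuter A A' A'' F m M πR h₂ v₂ =
      (coupledNext A A' A'' F m M πR (replay m h₂ v₂)
        (coupledRun A A' A'' F m M πR (replay m h₂ v₂) h₂.length)).2 :=
  if_pos hrun

lemma outcome_coupledRefuter :
    outSt isRefB (coupledRefuter A A' A'' F m M πR) πV₂ (.R A'.init A''.init) =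
        (fun n => (coupledRun A A' A'' F m M πR πV₂ n).pos₂) ∧
      outLb isRefB (coupledRefuter A A' A'' F m M πR) πV₂ (.R A'.init A''.init) =
        fun n =>
          (coupledNext A A' A'' F m M πR πV₂ (coupledRun A A' A'' F m M πR πV₂ n)).2.1 := by
  refine outcome_eq_jointRun₂ _ _ _ isRefB _ _ (fun n hn => ?_)
    fun _ hn => coupledNext_snd_of_not_isRefB hn
  have hreplay : coupledRun A A' A'' F m M πR
      (replay m (coupledRun A A' A'' F m M πR πV₂ n).hist₂
        (coupledRun A A' A'' F m M πR πV₂ n).pos₂)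
      (coupledRun A A' A'' F m M πR πV₂ n).hist₂.length =
      coupledRun A A' A'' F m M πR πV₂ n := by
    rw [jointRun_hist₂_length]
    refine jointRun_congr _ _ _ fun k hk => coupledNext_congr fun _ => ?_
    rw [jointRun_hist₂]
    exact replay_hist m _ _ hk (jointRun_hist₂_length _ _ _ k) _
  rw [coupledRefuter_eq (by rw [hreplay]), hreplay]
  exact congrArg Prod.snd (coupledNext_congr fun h => absurd (h.symm.trans hn) (by decide)).symm

variable (hne : ∃ σ, σ ∉ F ∧ σ ≠ m)
include hne

lemma fullEdge_coupledNext_fst {c : JointCfg (GS S S'' L) (GS S' S'' L) L}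
    (hc : isRefB c.pos₁ = false) :
    fullEdge A A'' F m c.pos₁ (coupledNext A A' A'' F m M πR πV₂ c).1.1
      (coupledNext A A' A'' F m M πR πV₂ c).1.2 := by
  simp only [coupledNext, hc, Bool.false_eq_true, if_false]
  exact fullEdge_chooseMove hne _ _

lemma fullEdge_coupledNext_snd {c : JointCfg (GS S S'' L) (GS S' S'' L) L}
    (hc : isRefB c.pos₂ = true) :
    fullEdge A' A'' F m c.pos₂ (coupledNext A A' A'' F m M πR πV₂ c).2.1
      (coupledNext A A' A'' F m M πR πV₂ c).2.2 := by
  simp only [coupledNext, hc, if_true]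
  exact fullEdge_chooseMove hne _ _

lemma fullEdge_coupledVerifier (h : List (GS S S'' L × L)) {v : GS S S'' L}
    (hv : isRefB v = false) :
    fullEdge A A'' F m v (coupledVerifier A A' A'' F m M πR πV₂ h v).1
      (coupledVerifier A A' A'' F m M πR πV₂ h v).2 := by
  unfold coupledVerifier
  split
  · next hpos => exact hpos ▸ fullEdge_coupledNext_fst hne (hpos ▸ hv)
  · exact fullEdge_defaultMove hne v

lemma fullEdge_coupledRefuter (h₂ : List (GS S' S'' L × L)) {v₂ : GS S' S'' L}
    (hv₂ : isRefB v₂ = true) :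
    fullEdge A' A'' F m v₂ (coupledRefuter A A' A'' F m M πR h₂ v₂).1
      (coupledRefuter A A' A'' F m M πR h₂ v₂).2 := by
  unfold coupledRefuter
  split
  · next hpos =>
    have h := fullEdge_coupledNext_snd (A := A) (A' := A') (A'' := A'') (M := M) (πR := πR)
      (πV₂ := replay m h₂ v₂) hne (hpos ▸ hv₂)
    rwa [hpos] at h
  · exact fullEdge_defaultMove hne v₂

variable (hA : ∀ s, ∃ e t, A.step s e t) (hSA : ∀ s e t, A.step s e t → e ∉ F ∧ e ≠ m)
  (hm : m ∉ F) (hM : IsFaultFreeBisim A A' F m M)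
  (hπR : ∀ h v, isRefB v = true → fullEdge A A'' F m v (πR h v).1 (πR h v).2)
  (hπV₂ : ∀ h v, isRefB v = false → fullEdge A' A'' F m v (πV₂ h v).1 (πV₂ h v).2)
include hA hSA hm hM hπR hπV₂

lemma coupledMoves_coupledNext {c : JointCfg (GS S S'' L) (GS S' S'' L) L}
    (hc : Coupled M c.pos₁ c.pos₂) (hv₂ : c.pos₂ ≠ .err) :
    CoupledMoves M F (coupledNext A A' A'' F m M πR πV₂ c).1
      (coupledNext A A' A'' F m M πR πV₂ c).2 := by
  cases h₁ : isRefB c.pos₁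
  · have h₂ : isRefB c.pos₂ = false := hc.isRefB_eq hv₂ ▸ h₁
    simp only [coupledNext, h₁, h₂, Bool.false_eq_true, if_false]
    exact chooseMove_spec (P := fun e => CoupledMoves M F e (πV₂ c.hist₂ c.pos₂))
      (hc.exists_verifier_answer hm hne hM hv₂ h₁ (hπV₂ _ _ h₂))
  · have h₂ : isRefB c.pos₂ = true := hc.isRefB_eq hv₂ ▸ h₁
    simp only [coupledNext, h₁, h₂, if_true]
    exact chooseMove_spec (P := CoupledMoves M F (πR c.hist₁ c.pos₁))
      (hc.exists_refuter_answer hA hSA hM hv₂ h₁ (hπR _ _ h₁))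

lemma coupled_coupledRun (n : ℕ) :
    Coupled M (coupledRun A A' A'' F m M πR πV₂ n).pos₁
      (coupledRun A A' A'' F m M πR πV₂ n).pos₂ := by
  induction n with
  | zero => exact .R hM.1
  | succ n ih =>
    by_cases hv₂ : (coupledRun A A' A'' F m M πR πV₂ n).pos₂ = .err
    · have he := fullEdge_coupledNext_snd (A := A) (A' := A') (A'' := A'') (M := M) (πR := πR)
        (πV₂ := πV₂) hne (c := coupledRun A A' A'' F m M πR πV₂ n) (by rw [hv₂]; rfl)
      rw [hv₂] at he
      have herr : (coupledRun A A' A'' F m M πR πV₂ (n+1)).pos₂ = .err := (fullEdge_err he).2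
      exact herr ▸ .err _
    · exact (coupledMoves_coupledNext hne hA hSA hm hM hπR hπV₂ ih hv₂).2.2

end Coupling

section StrategyTransfer

variable {S S' S'' L : Type} {A : TS S L} {A' : TS S' L} {A'' : TS S'' L} {F : Set L} {m : L}
  {M : S → S' → Prop} (hne : ∃ σ, σ ∉ F ∧ σ ≠ m)
include hne

noncomputable def coupledVerifierStrat (M : S → S' → Prop) (πR : RStrat A A'' F m)
    (πV₂ : VStrat A' A'' F m) : VStrat A A'' F m :=
  ⟨coupledVerifier A A' A'' F m M πR.1 πV₂.1,
    fun h _ hv => fullEdge_coupledVerifier hne h hv⟩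

noncomputable def coupledRefuterStrat (M : S → S' → Prop) (πR : RStrat A A'' F m) :
    RStrat A' A'' F m :=
  ⟨coupledRefuter A A' A'' F m M πR.1, fun h₂ _ hv => fullEdge_coupledRefuter hne h₂ hv⟩

lemma outcomePayoff_coupledVerifierStrat_le (hA : ∀ s, ∃ e t, A.step s e t)
    (hSA : ∀ s e t, A.step s e t → e ∉ F ∧ e ≠ m) (hm : m ∉ F)
    (hM : IsFaultFreeBisim A A' F m M) (πR : RStrat A A'' F m) (πV₂ : VStrat A' A'' F m) :
    outcomePayoff πR (coupledVerifierStrat hne M πR πV₂) ≤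
      outcomePayoff (coupledRefuterStrat hne M πR) πV₂ := by
  have hp := isPlay_outcome_strat πR (coupledVerifierStrat hne M πR πV₂)
  have hp₂ := isPlay_outcome_strat (coupledRefuterStrat hne M πR) πV₂
  dsimp only [outcomePayoff, coupledVerifierStrat, coupledRefuterStrat] at hp hp₂ ⊢
  obtain ⟨hst, hlb⟩ := outcome_coupledVerifier (A' := A') (F := F) (m := m) (M := M)
    (πR := πR.1) (πV₂ := πV₂.1)
  obtain ⟨hst₂, hlb₂⟩ := outcome_coupledRefuter (A := A) (F := F) (m := m) (M := M)
    (πR := πR.1) (πV₂ := πV₂.1)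
  rw [hst, hlb] at hp ⊢
  rw [hst₂, hlb₂] at hp₂ ⊢
  refine payoff_le_payoff hp hp₂ fun n hn => ?_
  have h := coupledMoves_coupledNext hne hA hSA hm hM πR.2 πV₂.2
    (coupled_coupledRun hne hA hSA hm hM πR.2 πV₂.2 n) hn
  exact ⟨h.1, h.2.1⟩

theorem maskingValue_le_of_isFaultFreeBisim (hA : ∀ s, ∃ e t, A.step s e t)
    (hSA : ∀ s e t, A.step s e t → e ∉ F ∧ e ≠ m) (hm : m ∉ F)
    (hM : IsFaultFreeBisim A A' F m M) :
    maskingValue A A'' F m ≤ maskingValue A' A'' F m :=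
  maskingValue_le_maskingValue hne hne fun πR => ⟨coupledRefuterStrat hne M πR, fun πV₂ =>
    ⟨coupledVerifierStrat hne M πR πV₂,
      outcomePayoff_coupledVerifierStrat_le hne hA hSA hm hM πR πV₂⟩⟩

end StrategyTransfer

theorem masking_distance_triangle_general {S S' S'' L : Type}
    [Finite S] [Finite S'] [Finite L]
    (A : TS S L) (A' : TS S' L) (A'' : TS S'' L)
    (F' F'' : Set L) (m : L) (hF : F' ⊆ F'') (hm : m ∉ F'')
    (hne : ∃ σ : L, σ ∉ F'' ∧ σ ≠ m)
    (hA : ∀ s, ∃ e t, A.step s e t)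
    (hSA : ∀ s e t, A.step s e t → e ∉ F'' ∧ e ≠ m) :
    maskingValue A A'' F'' m ≤
      maskingValue A A' F' m + maskingValue A' A'' F'' m := by
  have hne' : ∃ σ, σ ∉ F' ∧ σ ≠ m :=
    hne.imp fun σ hσ => ⟨fun h => hσ.1 (hF h), hσ.2⟩
  by_cases hinit : GS.R A.init A'.init ∈ attractor A A' F' m
  · have := one_le_maskingValue_of_mem_attractor (fun h => hm (hF h)) hne' hinit
    linarith [maskingValue_le_one A A'' F'' m hne, maskingValue_nonneg A' A'' F'' m hne]
  · have := maskingValue_le_of_isFaultFreeBisim (A'' := A'') hne hA hSA hm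
      ((isFaultFreeBisim_of_not_mem_attractor hinit).mono hF)
    linarith [maskingValue_nonneg A A' F' m hne']

/-- the masking distance satisfies the triangle inequality:
for `A` (nominal), `A'` with fault set `F'`, and `A''` with fault set
`F'' ⊇ F'`, `δ_m(A, A'') ≤ δ_m(A, A') + δ_m(A', A'')`. -/
theorem masking_distance_triangle {S S' S'' L : Type}
    [Finite S] [Finite S'] [Finite S''] [Finite L]
    (A : TS S L) (A' : TS S' L) (A'' : TS S'' L)
    (F' F'' : Set L) (m : L) (hF : F' ⊆ F'') (hm : m ∉ F'')
    (hne : ∃ σ : L, σ ∉ F'' ∧ σ ≠ m)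
    (hA : ∀ s, ∃ e t, A.step s e t)
    (hA' : ∀ s', ∃ e t', A'.step s' e t')
    (hA'' : ∀ s'', ∃ e t'', A''.step s'' e t'')
    (hSA : ∀ s e t, A.step s e t → e ∉ F'' ∧ e ≠ m)
    (hSA' : ∀ s' e t', A'.step s' e t' → e ≠ m)
    (hSA'' : ∀ s'' e t'', A''.step s'' e t'' → e ≠ m) :
    maskingValue A A'' F'' m ≤
      maskingValue A A' F' m + maskingValue A' A'' F'' m :=
  masking_distance_triangle_general A A' A'' F' F'' m hF hm hne hA hSA
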